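/- arXiv:2204.12871 — 2 statements merged into one kernel-verified Lean document; each statement's English description precedes it below -/
import Mathlib

section
/- Let B be a rare basis in ℝⁿ each of whose intervals has dyadic side lengths, let S₁,…,Sₙ ⊂ ℤ be infinite sets, and suppose the spectrum of B is dense in S₁×⋯×Sₙ. Then for every k ∈ ℕ there exist increasing sequences (s_{1,m})_{m=0}^k,…,(s_{n,m})_{m=0}^k with members from S₁,…,Sₙ respectively such that for every n-tuple (m₁,…,mₙ) ∈ {1,…,k}ⁿ there exists an interval R₁×⋯×Rₙ ∈ B with |R_j| ∈ (2^{s_{j,m_j−1}}, 2^{s_{j,m_j}}] for every j = 1,…,n. -/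
open MeasureTheory Set
open scoped ENNReal

noncomputable section

/-- An axis-parallel interval (box) in `ℝⁿ`, given by its left and right endpoints. -/
structure BoxInterval (n : ℕ) where
  a : Fin n → ℝ
  b : Fin n → ℝ
  hab : ∀ j, a j < b j

namespace BoxInterval

/-- The underlying set of a box. -/
def toSet {n : ℕ} (R : BoxInterval n) : Set (Fin n → ℝ) :=
  Set.univ.pi fun j => Set.Icc (R.a j) (R.b j)

/-- The side length of a box in direction `j`. -/
def side {n : ℕ} (R : BoxInterval n) (j : Fin n) : ℝ := R.b j - R.a j

/-- Translation of a box by a vector `v`. -/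
def translate {n : ℕ} (R : BoxInterval n) (v : Fin n → ℝ) : BoxInterval n where
  a := fun j => R.a j + v j
  b := fun j => R.b j + v j
  hab := fun j => by have h := R.hab j; linarith

end BoxInterval

/-- A rare basis in `ℝⁿ`: a nonempty translation-invariant collection of intervals. -/
def IsRareBasis {n : ℕ} (B : Set (BoxInterval n)) : Prop :=
  B.Nonempty ∧ ∀ R ∈ B, ∀ v : Fin n → ℝ, R.translate v ∈ B

/-- The geometric maximal operator `M_B` associated with a collection `B` of boxes:
`M_B f (x) = sup { (1/|R|) ∫_R |f| : x ∈ R ∈ B }`. -/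
def maxOp {n : ℕ} (B : Set (BoxInterval n)) (f : (Fin n → ℝ) → ℝ)
    (x : Fin n → ℝ) : ℝ≥0∞ :=
  ⨆ (R : BoxInterval n) (_ : R ∈ B) (_ : x ∈ R.toSet),
    (∫⁻ y in R.toSet, ENNReal.ofReal |f y| ∂volume) / volume R.toSet

/-- The spectrum `W_B ⊂ ℤⁿ` of a collection of boxes: all tuples
`(⌈log₂ |R₁|⌉, …, ⌈log₂ |Rₙ|⌉)` over boxes `R₁ × ⋯ × Rₙ ∈ B`. -/
def spectrumB {n : ℕ} (B : Set (BoxInterval n)) : Set (Fin n → ℤ) :=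
  {w | ∃ R ∈ B, ∀ j, w j = ⌈Real.logb 2 (R.side j)⌉}

/-- The slice `W_t` of `W ⊂ ℤ^{k+1}` over `t ∈ ℤᵏ`. -/
def sliceZ {k : ℕ} (W : Set (Fin (k + 1) → ℤ)) (t : Fin k → ℤ) : Set ℤ :=
  {τ | Fin.snoc t τ ∈ W}

/-- `W` is a net for `S` in `ℤ^{k+1}`: every slice of `W` is a one-dimensional
net for the corresponding slice of `S`. -/
def IsNetMulti {k : ℕ} (W S : Set (Fin (k + 1) → ℤ)) : Prop :=
  ∀ t : Fin k → ℤ, ∃ N : ℕ, ∀ τ ∈ sliceZ S t, ∃ w ∈ sliceZ W t, |τ - w| ≤ (N : ℤ)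

/-- Projection of `W ⊂ ℤⁿ` onto the first `k` coordinates. -/
def projZ {n : ℕ} (k : ℕ) (hk : k ≤ n) (W : Set (Fin n → ℤ)) : Set (Fin k → ℤ) :=
  (fun w (i : Fin k) => w (Fin.castLE hk i)) '' W

/-- `W ⊂ ℤⁿ` is dense in `S₁ × ⋯ × Sₙ`: for each `k`, `π_{k+1}(W)` is a net for
`π_k(W) × S_{k+1}`. -/
def IsDenseIn {n : ℕ} (W : Set (Fin n → ℤ)) (S : Fin n → Set ℤ) : Prop :=
  ∀ k : Fin n,
    IsNetMulti (projZ (k.val + 1) k.isLt W)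
      {v : Fin (k.val + 1) → ℤ |
        Fin.init v ∈ projZ k.val (Nat.le_of_lt k.isLt) W ∧ v (Fin.last k.val) ∈ S k}

/-- `Ω_{n,k}`: the set of `n`-tuples of positive integers summing to `k`. -/
def OmegaNK (n k : ℕ) : Set (Fin n → ℕ) :=
  {m | (∀ j, 1 ≤ m j) ∧ ∑ j, m j = k}

/-- The smallest box concentric with `R`, containing `R`, with dyadic side lengths. -/
def dyadicHull {n : ℕ} (R : BoxInterval n) : BoxInterval n where
  a := fun j => (R.a j + R.b j) / 2 - (2:ℝ) ^ ⌈Real.logb 2 (R.side j)⌉ / 2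
  b := fun j => (R.a j + R.b j) / 2 + (2:ℝ) ^ ⌈Real.logb 2 (R.side j)⌉ / 2
  hab := fun j => by
    have h : (0:ℝ) < (2:ℝ) ^ ⌈Real.logb 2 (R.side j)⌉ := by positivity
    linarith

/-- The dyadic skeleton `B_d` of a collection `B`. -/
def dyadicSkeleton {n : ℕ} (B : Set (BoxInterval n)) : Set (BoxInterval n) :=
  {Rd | ∃ R ∈ B, Rd = dyadicHull R}

/-- `B` is `Ω`-complete (for `Ω ⊆ Ω_{n,k}`). -/
def OmegaComplete {n : ℕ} (B : Set (BoxInterval n)) (k : ℕ) (Ω : Set (Fin n → ℕ)) : Prop :=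
  ∃ s : Fin n → ℕ → ℤ,
    (∀ j, ∀ m, m < k → s j m < s j (m + 1)) ∧
    ∀ m ∈ Ω, ∃ R ∈ dyadicSkeleton B, ∀ j,
      R.side j ∈ Set.Ioc ((2:ℝ) ^ s j (m j - 1)) ((2:ℝ) ^ s j (m j))

/-- Product of an `n`-dimensional box and a one-dimensional box. -/
def prodBox {n : ℕ} (J1 : BoxInterval n) (J2 : BoxInterval 1) : BoxInterval (n + 1) where
  a := Fin.snoc J1.a (J2.a 0)
  b := Fin.snoc J1.b (J2.b 0)
  hab := fun j => by
    induction j using Fin.lastCases with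
    | last => simpa using J2.hab 0
    | cast i => simpa using J1.hab i

/-- The product basis `B₁ × B₂`. -/
def prodBasis {n : ℕ} (B1 : Set (BoxInterval n)) (B2 : Set (BoxInterval 1)) :
    Set (BoxInterval (n + 1)) :=
  {R | ∃ J1 ∈ B1, ∃ J2 ∈ B2, R = prodBox J1 J2}

/-- The (is)-property of a rare basis in `ℝ²`. -/
def ISProperty (B : Set (BoxInterval 2)) : Prop :=
  ∀ k : ℕ, ∃ R : Fin (k + 1) → BoxInterval 2,
    (∀ i, R i ∈ B) ∧
    (∀ i, (R i).a = fun _ => 0) ∧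
    (∀ i, ∃ pq : Fin 2 → ℤ, ∀ l, (R i).b l = (2:ℝ) ^ pq l) ∧
    (∀ i j, i ≠ j → ∀ v : Fin 2 → ℝ, ¬ ((R i).translate v).toSet ⊆ (R j).toSet) ∧
    (∀ i j, ∃ Q ∈ B, Q.toSet = (R i).toSet ∩ (R j).toSet)

/-!
Choose the sequences one coordinate at a time. Let `W` be the spectrum and suppose `s_1, …, s_K`
are chosen so that every cell `∏ᵢ (s_{i,mᵢ-1}, s_{i,mᵢ}]`, `m ∈ {1,…,k}ᴷ`, contains a point `u_m`
of `π_K(W)`. Since `π_{K+1}(W)` is a net for `π_K(W) × S_{K+1}`, the finitely many slices over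
the points `u_m` are nets with one common constant `N`. Choose
`s_{K+1,0} < τ_1 < s_{K+1,1} < ⋯ < τ_k < s_{K+1,k}` in `S_{K+1}` with consecutive gaps larger
than `N`; then the slice over `u_m` has a point within `N` of `τ_l`, hence in
`(s_{K+1,l-1}, s_{K+1,l}]`. For `K = n` the points of `W` are spectra of boxes with dyadic
sides, so `|R_j| = 2^{w_j}`.
-/

lemma exists_seq_add_lt_of_not_bddAbove {S : Set ℤ} (hS : ¬BddAbove S) (N : ℤ) :
    ∃ x : ℕ → ℤ, (∀ i, x i ∈ S) ∧ ∀ i, x i + N < x (i + 1) := by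
  rw [not_bddAbove_iff] at hS
  choose g hgS hlt using hS
  refine ⟨fun i => (fun a => g (a + N))^[i] (g 0), fun i => ?_, fun i => ?_⟩
  · cases i with
    | zero => exact hgS 0
    | succ i => dsimp only; rw [Function.iterate_succ_apply']; exact hgS _
  · dsimp only
    rw [Function.iterate_succ_apply']
    exact hlt _

lemma Set.Infinite.exists_seq_add_lt {S : Set ℤ} (hS : S.Infinite) (N : ℤ) (L : ℕ) :
    ∃ x : ℕ → ℤ, (∀ i ≤ L, x i ∈ S) ∧ ∀ i < L, x i + N < x (i + 1) := by
  by_cases hup : BddAbove S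
  · have hdown : ¬BddAbove (-S) := by
      rw [bddAbove_neg]
      exact fun hdown => hS (hdown.finite_of_bddAbove hup)
    obtain ⟨x, hxS, hx⟩ := exists_seq_add_lt_of_not_bddAbove hdown N
    refine ⟨fun i => -x (L - i), fun i _ => Set.mem_neg.mp (hxS _), fun i hi => ?_⟩
    have := hx (L - (i + 1))
    rw [show L - (i + 1) + 1 = L - i by omega] at this
    dsimp only
    omega
  · obtain ⟨x, hxS, hx⟩ := exists_seq_add_lt_of_not_bddAbove hup N
    exact ⟨x, fun i _ => hxS i, fun i _ => hx i⟩

lemma IsNetMulti.exists_uniform {k : ℕ} {W S : Set (Fin (k + 1) → ℤ)} (h : IsNetMulti W S)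
    {F : Set (Fin k → ℤ)} (hF : F.Finite) :
    ∃ N : ℕ, ∀ t ∈ F, ∀ τ ∈ sliceZ S t, ∃ w ∈ sliceZ W t, |τ - w| ≤ (N : ℤ) := by
  choose N hN using h
  refine ⟨hF.toFinset.sup N, fun t ht τ hτ => ?_⟩
  obtain ⟨w, hw, hτw⟩ := hN t τ hτ
  have : N t ≤ hF.toFinset.sup N := Finset.le_sup (hF.mem_toFinset.mpr ht)
  exact ⟨w, hw, hτw.trans (by exact_mod_cast this)⟩

def MeetsAllCells {K : ℕ} (k : ℕ) (s : Fin K → ℕ → ℤ) (V : Set (Fin K → ℤ)) : Prop :=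
  ∀ m : Fin K → ℕ, (∀ i, 1 ≤ m i ∧ m i ≤ k) →
    ∃ u ∈ V, ∀ i, u i ∈ Ioc (s i (m i - 1)) (s i (m i))

lemma MeetsAllCells.exists_snoc {K k : ℕ} {s : Fin K → ℕ → ℤ} {V : Set (Fin K → ℤ)}
    (hs : MeetsAllCells k s V) {V' : Set (Fin (K + 1) → ℤ)} {T : Set ℤ} (hT : T.Infinite)
    (hnet : IsNetMulti V' {v | Fin.init v ∈ V ∧ v (Fin.last K) ∈ T}) :
    ∃ t : ℕ → ℤ, (∀ m ≤ k, t m ∈ T) ∧ (∀ m < k, t m < t (m + 1)) ∧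
      MeetsAllCells k (Fin.snoc (α := fun _ => ℕ → ℤ) s t) V' := by
  choose! u huV hu using hs
  have hgrid : {m : Fin K → ℕ | ∀ i, 1 ≤ m i ∧ m i ≤ k}.Finite := by
    simpa only [Set.pi, Set.mem_univ, forall_const, Set.mem_Icc] using
      Set.Finite.pi fun _ : Fin K => Set.finite_Icc 1 k
  obtain ⟨N, hN⟩ := hnet.exists_uniform (hgrid.image u)
  obtain ⟨x, hxT, hx⟩ := hT.exists_seq_add_lt N (2 * k)
  refine ⟨fun m => x (2 * m), fun m hm => hxT _ (by omega), fun m hm => ?_, fun m hm => ?_⟩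
  · have h₁ := hx (2 * m) (by omega)
    have h₂ := hx (2 * m + 1) (by omega)
    rw [show 2 * m + 1 + 1 = 2 * (m + 1) by omega] at h₂
    dsimp only
    omega
  · set m₀ := Fin.init m
    set l := m (Fin.last K)
    have hm₀ : ∀ i, 1 ≤ m₀ i ∧ m₀ i ≤ k := fun i => hm i.castSucc
    have hl : 1 ≤ l ∧ l ≤ k := hm (Fin.last K)
    -- `x (2l - 1)` is the `τ_l` of the proof idea
    have hτ : x (2 * (l - 1) + 1) ∈ sliceZ {v | Fin.init v ∈ V ∧ v (Fin.last K) ∈ T} (u m₀) := by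
      refine ⟨?_, ?_⟩
      · rw [Fin.init_snoc]; exact huV m₀ hm₀
      · rw [Fin.snoc_last]; exact hxT _ (by omega)
    obtain ⟨w, hwV', hw⟩ := hN _ ⟨m₀, hm₀, rfl⟩ _ hτ
    refine ⟨Fin.snoc (u m₀) w, hwV', fun i => ?_⟩
    induction i using Fin.lastCases with
    | last =>
      have h₁ := hx (2 * (l - 1)) (by omega)
      have h₂ := hx (2 * (l - 1) + 1) (by omega)
      rw [show 2 * (l - 1) + 1 + 1 = 2 * l by omega] at h₂
      rw [abs_le] at hw
      simp only [Fin.snoc_last, Set.mem_Ioc]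
      change x (2 * (l - 1)) < w ∧ w ≤ x (2 * l)
      constructor <;> omega
    | cast i =>
      simp only [Fin.snoc_castSucc]
      exact hu m₀ hm₀ i

lemma exists_seq_meetsAllCells_projZ {n : ℕ} {W : Set (Fin n → ℤ)} (hW : W.Nonempty)
    {S : Fin n → Set ℤ} (hS : ∀ j, (S j).Infinite) (hdense : IsDenseIn W S) (k : ℕ) :
    ∀ K (hK : K ≤ n), ∃ s : Fin K → ℕ → ℤ,
      (∀ i m, m < k → s i m < s i (m + 1)) ∧ (∀ i m, m ≤ k → s i m ∈ S (Fin.castLE hK i)) ∧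
      MeetsAllCells k s (projZ K hK W) := by
  intro K
  induction K with
  | zero =>
    intro hK
    obtain ⟨w, hw⟩ := hW
    exact ⟨fun _ _ => 0, finZeroElim, finZeroElim,
      fun _ _ => ⟨_, ⟨w, hw, rfl⟩, finZeroElim⟩⟩
  | succ K ih =>
    intro hK
    obtain ⟨s, hsmono, hsS, hs⟩ := ih (Nat.le_of_succ_le hK)
    obtain ⟨t, htS, htmono, hst⟩ := hs.exists_snoc (hS ⟨K, hK⟩) (hdense ⟨K, hK⟩)
    refine ⟨Fin.snoc (α := fun _ => ℕ → ℤ) s t, fun i => ?_, fun i => ?_, hst⟩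
    · induction i using Fin.lastCases with
      | last => simpa only [Fin.snoc_last] using htmono
      | cast i => simpa only [Fin.snoc_castSucc] using hsmono i
    · induction i using Fin.lastCases with
      | last => simp only [Fin.snoc_last]; exact htS
      | cast i => simpa only [Fin.snoc_castSucc, Fin.castLE_castSucc] using hsS i

lemma projZ_self {n : ℕ} (W : Set (Fin n → ℤ)) : projZ n le_rfl W = W := by
  simp [projZ]

lemma ceil_logb_two_zpow (t : ℤ) : ⌈Real.logb 2 ((2 : ℝ) ^ t)⌉ = t := by
  rw [← Real.rpow_intCast, Real.logb_rpow two_pos (by norm_num), Int.ceil_intCast]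

theorem statement2_general (n : ℕ) (B : Set (BoxInterval n)) (hB : IsRareBasis B)
    (hdyadic : ∀ R ∈ B, ∀ j, ∃ t : ℤ, R.side j = (2:ℝ) ^ t)
    (S : Fin n → Set ℤ) (hS : ∀ j, (S j).Infinite)
    (hdense : IsDenseIn (spectrumB B) S) :
    ∀ k : ℕ, ∃ s : Fin n → ℕ → ℤ,
      (∀ j, ∀ m, m < k → s j m < s j (m + 1)) ∧
      (∀ j, ∀ m, m ≤ k → s j m ∈ S j) ∧
      ∀ m : Fin n → ℕ, (∀ j, 1 ≤ m j ∧ m j ≤ k) →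
        ∃ R ∈ B, ∀ j,
          R.side j ∈ Set.Ioc ((2:ℝ) ^ s j (m j - 1)) ((2:ℝ) ^ s j (m j)) := by
  intro k
  obtain ⟨R₀, hR₀⟩ := hB.1
  have hW : (spectrumB B).Nonempty := ⟨_, R₀, hR₀, fun _ => rfl⟩
  obtain ⟨s, hsmono, hsS, hs⟩ := exists_seq_meetsAllCells_projZ hW hS hdense k n le_rfl
  rw [projZ_self] at hs
  refine ⟨s, hsmono, fun j => by simpa only [Fin.castLE_rfl, id] using hsS j, fun m hm => ?_⟩
  obtain ⟨w, ⟨R, hR, hRw⟩, hw⟩ := hs m hm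
  refine ⟨R, hR, fun j => ?_⟩
  obtain ⟨t, ht⟩ := hdyadic R hR j
  have hside : R.side j = 2 ^ w j := by rw [hRw, ht, ceil_logb_two_zpow]
  rw [hside]
  exact ⟨zpow_lt_zpow_right₀ one_lt_two (hw j).1, zpow_le_zpow_right₀ one_le_two (hw j).2⟩

/-- Lemma 1: if all boxes of the rare basis `B` have dyadic side lengths and the spectrum of
`B` is dense in `S₁ × ⋯ × Sₙ`, then for every `k` there are increasing sequences
`(s_{j,m})_{m=0}^k` in `S_j` such that every `(m₁,…,mₙ) ∈ {1,…,k}ⁿ` is realized by a box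
`R ∈ B` with `|R_j| ∈ (2^{s_{j,m_j-1}}, 2^{s_{j,m_j}}]`. -/
theorem statement2 (n : ℕ) (hn : 1 ≤ n) (B : Set (BoxInterval n)) (hB : IsRareBasis B)
    (hdyadic : ∀ R ∈ B, ∀ j, ∃ t : ℤ, R.side j = (2:ℝ) ^ t)
    (S : Fin n → Set ℤ) (hS : ∀ j, (S j).Infinite)
    (hdense : IsDenseIn (spectrumB B) S) :
    ∀ k : ℕ, ∃ s : Fin n → ℕ → ℤ,
      (∀ j, ∀ m, m < k → s j m < s j (m + 1)) ∧
      (∀ j, ∀ m, m ≤ k → s j m ∈ S j) ∧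
      ∀ m : Fin n → ℕ, (∀ j, 1 ≤ m j ∧ m j ≤ k) →
        ∃ R ∈ B, ∀ j,
          R.side j ∈ Set.Ioc ((2:ℝ) ^ s j (m j - 1)) ((2:ℝ) ^ s j (m j)) :=
  statement2_general n B hB hdyadic S hS hdense

end
end

section
/- Let S₁,…,Sₙ ⊂ ℤ be infinite sets and let B be the basis consisting of all n-dimensional intervals with side lengths of the form 2^{s₁},…,2^{sₙ} where s₁ ∈ S₁,…,sₙ ∈ Sₙ. Then there is a constant cₙ > 0 depending only on n such that for every α ∈ (0,1) there exists a bounded measurable set E ⊂ ℝⁿ of positive Lebesgue measure with |{x ∈ ℝⁿ : M_B(χ_E)(x) > α}| ≥ cₙ · (1/α) · (1 + log(1/α))^{n−1} · |E|. -/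
open MeasureTheory Set
open scoped ENNReal

noncomputable section

/-!
Choose `k` with `2 ^ (-k - 1) ≤ α < 2 ^ (-k)` and scales `σ j 0 < ⋯ < σ j k` in `S j`. In each
coordinate let `E_j ⊂ [0, 2 ^ σ j k)` be the set of points whose binary digits at the positions
`σ j 0, …, σ j (k - 1)` vanish, and let `E = ∏ E_j`. A point whose digits vanish at the
positions `σ j (l j), …, σ j (k - 1)` lies in a dyadic interval of length `2 ^ σ j (l j)` in which
`E_j` has density `2 ^ (-l j)`. Hence for each composition `l₁ + ⋯ + lₙ = k` into positive parts,
the layer of points whose lowest nonvanishing constrained digit in coordinate `j` sits at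
`σ j (l j - 1)` is contained in a box of `B` in which `E` has density `2 ^ (-k) > α`. These layers
are disjoint, each has measure `2 ^ (k - n) |E|`, and there are `≳ (k / n) ^ (n - 1)` of them.
When `α` is close to `1`, a single box of `B` serves as `E`.
-/

open scoped Pointwise

section Translates

lemma vadd_Ico (c a b : ℝ) : c +ᵥ Ico a b = Ico (c + a) (c + b) := by
  rw [← Set.image_vadd]
  exact Set.image_const_add_Ico c a b

variable {L D : ℝ}

lemma nat_mul_vadd_Ico_subset (hL : 0 ≤ L) (hLD : L ≤ D) {i N : ℕ} (hi : i < N) :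
    ((i : ℝ) * D) +ᵥ Ico 0 L ⊆ Ico 0 (N * D) := by
  have hiN : (i : ℝ) + 1 ≤ N := by exact_mod_cast hi
  have hD : 0 ≤ D := hL.trans hLD
  rw [vadd_Ico, add_zero]
  exact Ico_subset_Ico (by positivity) (by nlinarith)

lemma pairwiseDisjoint_nat_mul_vadd {A : Set ℝ} (hA : A ⊆ Ico 0 L) (hL : 0 ≤ L) (hLD : L ≤ D)
    (t : Set ℕ) : t.PairwiseDisjoint fun i : ℕ => ((i : ℝ) * D) +ᵥ A := by
  have hD : 0 ≤ D := hL.trans hLD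
  intro i _ j _ hij
  refine Disjoint.mono (vadd_set_mono hA) (vadd_set_mono hA) ?_
  rw [vadd_Ico, vadd_Ico, add_zero, add_zero, Ico_disjoint_Ico]
  rcases hij.lt_or_gt with h | h
  · have : (i : ℝ) + 1 ≤ j := by exact_mod_cast h
    rw [min_le_iff]; left; rw [le_max_iff]; right; nlinarith
  · have : (j : ℝ) + 1 ≤ i := by exact_mod_cast h
    rw [min_le_iff]; right; rw [le_max_iff]; left; nlinarith

lemma biUnion_nat_mul_vadd_inter {A J : Set ℝ} (hA : A ⊆ Ico 0 L) (hJ : J ⊆ Ico 0 L)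
    (hL : 0 ≤ L) (hLD : L ≤ D) {t : Finset ℕ} {i : ℕ} (hi : i ∈ t) :
    (⋃ j ∈ t, ((j : ℝ) * D) +ᵥ A) ∩ (((i : ℝ) * D) +ᵥ J) = ((i : ℝ) * D) +ᵥ (A ∩ J) := by
  rw [vadd_set_inter]
  refine Subset.antisymm ?_ (inter_subset_inter_left _ (subset_biUnion_of_mem (u := fun j : ℕ =>
    ((j : ℝ) * D) +ᵥ A) hi))
  rintro z ⟨hz, hzJ⟩
  obtain ⟨j, -, hzj⟩ := mem_iUnion₂.1 hz
  obtain rfl : j = i := by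
    by_contra hji
    have hd := pairwiseDisjoint_nat_mul_vadd (subset_refl (Ico 0 L)) hL hLD univ trivial trivial hji
    exact hd.ne_of_mem (vadd_set_mono hA hzj) (vadd_set_mono hJ hzJ) rfl
  exact ⟨hzj, hzJ⟩

lemma two_zpow_le_two_zpow_add_one (z : ℤ) : (2 : ℝ) ^ z ≤ 2 ^ (z + 1) :=
  zpow_le_zpow_right₀ one_le_two (Int.le_add_one le_rfl)

end Translates

lemma le_of_sum_eq {ι : Type*} [Fintype ι] {l : ι → ℕ} {k : ℕ} (hl : ∑ j, l j = k) (j : ι) :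
    l j ≤ k :=
  hl ▸ Finset.single_le_sum_of_canonicallyOrdered (Finset.mem_univ j)

/-- For strictly increasing `s` and `a ≤ m`, `dyadicCantor s a m` is the set of `x ∈ [0, 2 ^ s m)`
whose binary digits at the positions `s a, …, s (m - 1)` vanish: each step keeps only the left
halves of the dyadic intervals of length `2 ^ (s m + 1)`. -/
def dyadicCantor (s : ℕ → ℤ) (a : ℕ) : ℕ → Set ℝ
  | 0 => Ico 0 (2 ^ s a)
  | m + 1 =>
    if m + 1 ≤ a then Ico 0 (2 ^ s a)
    else ⋃ i ∈ Finset.range (2 ^ (s (m + 1) - s m - 1).toNat),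
      ((i : ℝ) * 2 ^ (s m + 1)) +ᵥ dyadicCantor s a m

namespace dyadicCantor

variable {s : ℕ → ℤ} {a b m : ℕ}

lemma of_le (h : m ≤ a) : dyadicCantor s a m = Ico 0 (2 ^ s a) := by
  cases m with
  | zero => rfl
  | succ m => rw [dyadicCantor, if_pos h]

lemma succ (h : a ≤ m) :
    dyadicCantor s a (m + 1) = ⋃ i ∈ Finset.range (2 ^ (s (m + 1) - s m - 1).toNat),
      ((i : ℝ) * 2 ^ (s m + 1)) +ᵥ dyadicCantor s a m := by
  rw [dyadicCantor, if_neg (by omega)]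

lemma measurableSet : MeasurableSet (dyadicCantor s a m) := by
  induction m with
  | zero => exact measurableSet_Ico
  | succ m ih =>
    rcases le_or_gt (m + 1) a with h | h
    · rw [of_le h]; exact measurableSet_Ico
    · rw [succ (by omega)]
      exact Finset.measurableSet_biUnion _ fun i _ => ih.const_vadd _

lemma natCast_two_pow_gap (hs : StrictMono s) (m : ℕ) :
    ((2 ^ (s (m + 1) - s m - 1).toNat : ℕ) : ℝ) = 2 ^ (s (m + 1) - s m - 1) := by
  have h : 0 ≤ s (m + 1) - s m - 1 := by have := hs (Nat.lt_add_one m); omega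
  rw [Nat.cast_pow, Nat.cast_ofNat, ← zpow_natCast, Int.toNat_of_nonneg h]

lemma natCast_two_pow_gap_mul (hs : StrictMono s) (m : ℕ) :
    ((2 ^ (s (m + 1) - s m - 1).toNat : ℕ) : ℝ) * 2 ^ (s m + 1) = 2 ^ s (m + 1) := by
  rw [natCast_two_pow_gap hs, ← zpow_add₀ two_ne_zero]
  ring_nf

variable (hs : StrictMono s)
include hs

lemma subset_Ico (h : a ≤ m) : dyadicCantor s a m ⊆ Ico 0 (2 ^ s m) := by
  induction m, h using Nat.le_induction with
  | base => rw [of_le le_rfl]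
  | succ m ham ih =>
    rw [succ ham, ← natCast_two_pow_gap_mul hs]
    exact iUnion₂_subset fun i hi => (vadd_set_mono ih).trans <|
      nat_mul_vadd_Ico_subset (by positivity) (two_zpow_le_two_zpow_add_one _)
        (Finset.mem_range.1 hi)

lemma volume_eq (h : a ≤ m) :
    volume (dyadicCantor s a m) = ENNReal.ofReal (2 ^ (s m - (m - a : ℕ))) := by
  induction m, h using Nat.le_induction with
  | base => rw [of_le le_rfl, Real.volume_Ico, Nat.sub_self]; simp
  | succ m ham ih =>
    rw [succ ham, measure_biUnion_finset (pairwiseDisjoint_nat_mul_vadd (subset_Ico hs ham)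
        (by positivity) (two_zpow_le_two_zpow_add_one _) _) fun i _ => measurableSet.const_vadd _]
    simp only [measure_vadd, ih, Finset.sum_const, Finset.card_range, nsmul_eq_mul]
    rw [← ENNReal.ofReal_natCast, ← ENNReal.ofReal_mul (by positivity), natCast_two_pow_gap hs,
      ← zpow_add₀ two_ne_zero]
    congr 2
    push_cast [Nat.sub_add_comm ham]
    ring

lemma subset_succ (h : a < m) : dyadicCantor s a m ⊆ dyadicCantor s (a + 1) m := by
  induction m, h using Nat.le_induction with
  | base => rw [of_le (le_refl (a + 1))]; exact subset_Ico hs (Nat.le_succ a)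
  | succ m ham ih =>
    rw [succ (by omega), succ ham]
    exact iUnion₂_mono fun i _ => vadd_set_mono ih

lemma mono (hab : a ≤ b) (hb : b ≤ m) : dyadicCantor s a m ⊆ dyadicCantor s b m := by
  induction b, hab using Nat.le_induction with
  | base => rfl
  | succ b hab ih => exact (ih (by omega)).trans (subset_succ hs (by omega))

lemma volume_ne_top (h : a ≤ m) : volume (dyadicCantor s a m) ≠ ⊤ := by
  rw [volume_eq hs h]; exact ENNReal.ofReal_ne_top

lemma volume_eq_two_pow_mul (h : a ≤ m) :
    volume (dyadicCantor s a m) = 2 ^ a * volume (dyadicCantor s 0 m) := by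
  rw [volume_eq hs h, volume_eq hs (Nat.zero_le m), ← ENNReal.ofReal_ofNat 2,
    ← ENNReal.ofReal_pow zero_le_two, ← ENNReal.ofReal_mul (by positivity), ← zpow_natCast,
    ← zpow_add₀ two_ne_zero]
  congr 2
  push_cast [Nat.sub_zero, h]
  ring

lemma volume_diff_pred (ha : 1 ≤ a) (h : a ≤ m) :
    volume (dyadicCantor s a m \ dyadicCantor s (a - 1) m) =
      2 ^ (a - 1) * volume (dyadicCantor s 0 m) := by
  obtain ⟨b, rfl⟩ : ∃ b, a = b + 1 := ⟨a - 1, by omega⟩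
  rw [Nat.add_sub_cancel, measure_sdiff (subset_succ hs h) measurableSet.nullMeasurableSet
    (volume_ne_top hs (by omega)), volume_eq_two_pow_mul hs h,
    volume_eq_two_pow_mul hs (by omega : b ≤ m), pow_succ, mul_comm _ 2, mul_assoc, two_mul,
    ENNReal.add_sub_cancel_right]
  exact ENNReal.mul_ne_top (by simp) (volume_ne_top hs (Nat.zero_le m))

lemma exists_Ico_volume_eq (h : a ≤ m) {y : ℝ} (hy : y ∈ dyadicCantor s a m) :
    ∃ x, y ∈ Ico x (x + 2 ^ s a) ∧ Ico x (x + 2 ^ s a) ⊆ Ico 0 (2 ^ s m) ∧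
      volume (Ico x (x + 2 ^ s a)) =
        2 ^ a * volume (dyadicCantor s 0 m ∩ Ico x (x + 2 ^ s a)) := by
  induction m, h using Nat.le_induction generalizing y with
  | base =>
    rw [of_le le_rfl] at hy
    refine ⟨0, by rwa [zero_add], by rw [zero_add], ?_⟩
    rw [zero_add, inter_eq_left.2 (subset_Ico hs (Nat.zero_le a)),
      ← volume_eq_two_pow_mul hs le_rfl, of_le le_rfl]
  | succ m ham ih =>
    rw [succ ham] at hy
    obtain ⟨i, hi, z, hz, rfl⟩ : ∃ i ∈ Finset.range (2 ^ (s (m + 1) - s m - 1).toNat),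
        ∃ z ∈ dyadicCantor s a m, (i : ℝ) * 2 ^ (s m + 1) + z = y := by
      simpa [mem_vadd_set] using hy
    obtain ⟨x, hzx, hsub, hvol⟩ := ih hz
    refine ⟨(i : ℝ) * 2 ^ (s m + 1) + x, ?_⟩
    rw [add_assoc, ← add_zero ((i : ℝ) * 2 ^ (s m + 1)), ← vadd_Ico, add_zero]
    refine ⟨vadd_mem_vadd_set hzx, ?_, ?_⟩
    · rw [← natCast_two_pow_gap_mul hs]
      exact (vadd_set_mono hsub).trans (nat_mul_vadd_Ico_subset (by positivity)
        (two_zpow_le_two_zpow_add_one _) (Finset.mem_range.1 hi))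
    · rw [succ (Nat.zero_le m), biUnion_nat_mul_vadd_inter (subset_Ico hs (Nat.zero_le m)) hsub
        (by positivity) (two_zpow_le_two_zpow_add_one _) hi, measure_vadd, measure_vadd, hvol]

end dyadicCantor

namespace BoxInterval

variable {n : ℕ}

lemma toSet_eq_Icc (R : BoxInterval n) : R.toSet = Icc R.a R.b := pi_univ_Icc _ _

lemma measurableSet_toSet (R : BoxInterval n) : MeasurableSet R.toSet :=
  MeasurableSet.univ_pi fun _ => measurableSet_Icc

lemma isBounded_toSet (R : BoxInterval n) : Bornology.IsBounded R.toSet := by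
  rw [toSet_eq_Icc]; exact Metric.isBounded_Icc _ _

lemma volume_toSet (R : BoxInterval n) : volume R.toSet = ∏ j, ENNReal.ofReal (R.side j) := by
  rw [toSet_eq_Icc, Real.volume_Icc_pi]; rfl

lemma volume_toSet_pos (R : BoxInterval n) : 0 < volume R.toSet := by
  rw [volume_toSet]
  exact CanonicallyOrderedAdd.prod_pos.2 fun j _ => ENNReal.ofReal_pos.2 (sub_pos.2 (R.hab j))

lemma volume_toSet_ne_top (R : BoxInterval n) : volume R.toSet ≠ ⊤ := by
  rw [volume_toSet]; exact ENNReal.prod_ne_top fun _ _ => ENNReal.ofReal_ne_top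

lemma exists_side_eq (w : Fin n → ℝ) (hw : ∀ j, 0 < w j) :
    ∃ R : BoxInterval n, ∀ j, R.side j = w j :=
  ⟨⟨0, w, hw⟩, fun j => sub_zero (w j)⟩

end BoxInterval

section MaximalOperator

variable {n : ℕ} {B : Set (BoxInterval n)} {E : Set (Fin n → ℝ)}

lemma volume_inter_div_le_maxOp (hE : MeasurableSet E) {R : BoxInterval n} (hR : R ∈ B)
    {x : Fin n → ℝ} (hx : x ∈ R.toSet) :
    volume (E ∩ R.toSet) / volume R.toSet ≤ maxOp B (E.indicator fun _ => 1) x := by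
  refine le_iSup₂_of_le R hR (le_iSup_of_le hx (le_of_eq ?_))
  have hf : (fun y => ENNReal.ofReal |E.indicator (fun _ => (1 : ℝ)) y|) = E.indicator 1 := by
    funext y; by_cases hy : y ∈ E <;> simp [hy]
  rw [hf, lintegral_indicator_one hE, Measure.restrict_apply hE]

lemma volume_toSet_le_volume_maxOp_gt {R : BoxInterval n} (hR : R ∈ B) {α : ℝ} (hα : α < 1) :
    volume R.toSet ≤
      volume {x | ENNReal.ofReal α < maxOp B (R.toSet.indicator fun _ => 1) x} := by
  refine measure_mono fun x hx => ?_
  calc ENNReal.ofReal α < 1 := ENNReal.ofReal_lt_one.2 hα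
    _ = volume (R.toSet ∩ R.toSet) / volume R.toSet := by
      rw [inter_self, ENNReal.div_self R.volume_toSet_pos.ne' R.volume_toSet_ne_top]
    _ ≤ _ := volume_inter_div_le_maxOp R.measurableSet_toSet hR hx

end MaximalOperator

section CantorProduct

variable {n : ℕ} (σ : Fin n → ℕ → ℤ) (k : ℕ)

def cantorProd : Set (Fin n → ℝ) :=
  univ.pi fun j => dyadicCantor (σ j) 0 k

def cantorLayer (l : Fin n → ℕ) : Set (Fin n → ℝ) :=
  univ.pi fun j => dyadicCantor (σ j) (l j) k \ dyadicCantor (σ j) (l j - 1) k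

lemma measurableSet_cantorProd : MeasurableSet (cantorProd σ k) :=
  MeasurableSet.univ_pi fun _ => dyadicCantor.measurableSet

lemma measurableSet_cantorLayer (l : Fin n → ℕ) : MeasurableSet (cantorLayer σ k l) :=
  MeasurableSet.univ_pi fun _ => dyadicCantor.measurableSet.diff dyadicCantor.measurableSet

variable {σ k} (hσ : ∀ j, StrictMono (σ j))
include hσ

lemma isBounded_cantorProd : Bornology.IsBounded (cantorProd σ k) :=
  (Bornology.IsBounded.pi fun j => Metric.isBounded_Icc 0 ((2 : ℝ) ^ σ j k)).subset <|
    pi_mono fun j _ => (dyadicCantor.subset_Ico (hσ j) (Nat.zero_le k)).trans Ico_subset_Icc_self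

lemma volume_cantorProd_pos : 0 < volume (cantorProd σ k) := by
  rw [cantorProd, volume_pi_pi]
  refine CanonicallyOrderedAdd.prod_pos.2 fun j _ => ?_
  rw [dyadicCantor.volume_eq (hσ j) (Nat.zero_le k)]
  exact ENNReal.ofReal_pos.2 (by positivity)

lemma volume_cantorLayer {l : Fin n → ℕ} (hl₁ : ∀ j, 1 ≤ l j) (hl : ∑ j, l j = k) :
    volume (cantorLayer σ k l) = 2 ^ (k - n) * volume (cantorProd σ k) := by
  have hsum : ∑ j, (l j - 1) = k - n := by
    rw [Finset.sum_tsub_distrib _ fun j _ => hl₁ j, hl]; simp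
  rw [cantorLayer, cantorProd, volume_pi_pi, volume_pi_pi,
    Finset.prod_congr rfl fun j _ =>
      dyadicCantor.volume_diff_pred (hσ j) (hl₁ j) (le_of_sum_eq hl j),
    Finset.prod_mul_distrib, Finset.prod_pow_eq_pow_sum, hsum]

lemma pairwiseDisjoint_cantorLayer {Λ : Set (Fin n → ℕ)} (hΛ : ∀ l ∈ Λ, ∀ j, l j ≤ k) :
    Λ.PairwiseDisjoint (cantorLayer σ k) := by
  intro l hl l' hl' hne
  obtain ⟨j, hj⟩ := Function.ne_iff.1 hne
  wlog hlt : l j < l' j generalizing l l'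
  · exact (this hl' hl hne.symm hj.symm (by omega)).symm
  refine Set.disjoint_left.2 fun x hx hx' => (hx' j (mem_univ j)).2 ?_
  exact dyadicCantor.mono (hσ j) (by omega) (by have := hΛ l' hl' j; omega) (hx j (mem_univ j)).1

lemma exists_box_volume_eq_two_pow_mul {l : Fin n → ℕ} (hl : ∀ j, l j ≤ k) {x : Fin n → ℝ}
    (hx : ∀ j, x j ∈ dyadicCantor (σ j) (l j) k) :
    ∃ R : BoxInterval n, (∀ j, R.side j = 2 ^ σ j (l j)) ∧ x ∈ R.toSet ∧
      volume R.toSet = 2 ^ (∑ j, l j) * volume (cantorProd σ k ∩ R.toSet) := by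
  choose y hxy _ hvol using fun j => dyadicCantor.exists_Ico_volume_eq (hσ j) (hl j) (hx j)
  let R : BoxInterval n :=
    ⟨y, fun j => y j + 2 ^ σ j (l j), fun j => lt_add_of_pos_right _ (by positivity)⟩
  have hR : R.toSet =ᵐ[volume] univ.pi fun j => Ico (y j) (y j + 2 ^ σ j (l j)) :=
    Measure.pi_Ico_ae_eq_pi_Icc.symm
  refine ⟨R, fun j => add_sub_cancel_left _ _, fun j _ => Ico_subset_Icc_self (hxy j), ?_⟩
  rw [measure_congr hR, measure_congr ((ae_eq_refl _).inter hR), cantorProd, ← pi_inter_distrib,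
    volume_pi_pi, volume_pi_pi, Finset.prod_congr rfl fun j _ => hvol j, Finset.prod_mul_distrib,
    Finset.prod_pow_eq_pow_sum]

lemma cantorLayer_subset_maxOp_gt {B : Set (BoxInterval n)}
    (hB : ∀ R : BoxInterval n, (∀ j, ∃ i ≤ k, R.side j = 2 ^ σ j i) → R ∈ B)
    {l : Fin n → ℕ} (hl : ∑ j, l j = k) {α : ℝ} (hα : α < (2 ^ k)⁻¹) :
    cantorLayer σ k l ⊆
      {x | ENNReal.ofReal α < maxOp B ((cantorProd σ k).indicator fun _ => 1) x} := by
  intro x hx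
  obtain ⟨R, hside, hxR, hvol⟩ :=
    exists_box_volume_eq_two_pow_mul hσ (le_of_sum_eq hl) fun j => (hx j (mem_univ j)).1
  have hRB : R ∈ B := hB R fun j => ⟨l j, le_of_sum_eq hl j, hside j⟩
  rw [hl] at hvol
  calc ENNReal.ofReal α < (2 ^ k)⁻¹ := by
        rw [← ENNReal.ofReal_ofNat 2, ← ENNReal.ofReal_pow zero_le_two,
          ← ENNReal.ofReal_inv_of_pos (by positivity)]
        exact (ENNReal.ofReal_lt_ofReal_iff (by positivity)).2 hα
    _ ≤ volume (cantorProd σ k ∩ R.toSet) / volume R.toSet := by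
        rw [ENNReal.le_div_iff_mul_le (Or.inl R.volume_toSet_pos.ne')
          (Or.inl R.volume_toSet_ne_top), hvol, ENNReal.inv_mul_cancel_left (by simp) (by simp)]
    _ ≤ _ := volume_inter_div_le_maxOp (measurableSet_cantorProd σ k) hRB hxR

end CantorProduct

def boundedCompositions (m q k : ℕ) : Finset (Fin (m + 1) → ℕ) :=
  (Fintype.piFinset fun _ : Fin m => Finset.Icc 1 q).image fun μ => Fin.snoc μ (k - ∑ i, μ i)

lemma card_boundedCompositions (m q k : ℕ) : (boundedCompositions m q k).card = q ^ m := by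
  rw [boundedCompositions, Finset.card_image_of_injective _ fun μ μ' h => (Fin.snoc_inj.1 h).1]
  simp

lemma mem_boundedCompositions {m q k : ℕ} (hq : m * q < k) {l : Fin (m + 1) → ℕ}
    (hl : l ∈ boundedCompositions m q k) : (∀ j, 1 ≤ l j) ∧ ∑ j, l j = k := by
  obtain ⟨μ, hμ, rfl⟩ := Finset.mem_image.1 hl
  have hμq : ∀ i, 1 ≤ μ i ∧ μ i ≤ q := fun i => Finset.mem_Icc.1 (Fintype.mem_piFinset.1 hμ i)
  have hsum : ∑ i, μ i ≤ m * q := by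
    simpa using Finset.sum_le_sum fun i (_ : i ∈ Finset.univ) => (hμq i).2
  refine ⟨fun j => ?_, ?_⟩
  · induction j using Fin.lastCases with
    | last => rw [Fin.snoc_last]; omega
    | cast i => rw [Fin.snoc_castSucc]; exact (hμq i).1
  · rw [Fin.sum_univ_castSucc]
    simp only [Fin.snoc_castSucc, Fin.snoc_last]
    omega

lemma exists_strictMono_forall_le_mem {S : Set ℤ} (hS : S.Infinite) (k : ℕ) :
    ∃ s : ℕ → ℤ, StrictMono s ∧ ∀ i ≤ k, s i ∈ S := by
  obtain ⟨T, hTS, hT⟩ := hS.exists_subset_card_eq (k + 1)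
  let e := T.orderEmbOfFin hT
  refine ⟨fun i => if h : i ≤ k then e ⟨i, by omega⟩ else e (Fin.last k) + (i - k : ℕ),
    strictMono_nat_of_lt_succ fun i => ?_, fun i hi => ?_⟩
  · rcases lt_trichotomy (i + 1) (k + 1) with h | h | h
    · simp only [dif_pos (by omega : i ≤ k), dif_pos (by omega : i + 1 ≤ k)]
      exact e.strictMono (Fin.mk_lt_mk.2 (Nat.lt_add_one i))
    · simp only [dif_pos (by omega : i ≤ k), dif_neg (by omega : ¬i + 1 ≤ k)]
      obtain rfl : i = k := by omega
      exact lt_add_of_pos_right _ (by omega)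
    · simp only [dif_neg (by omega : ¬i ≤ k), dif_neg (by omega : ¬i + 1 ≤ k)]
      omega
  · simp only [dif_pos hi]
    exact hTS (T.orderEmbOfFin_mem hT _)

lemma mul_volume_cantorProd_le_volume_maxOp_gt {m k q : ℕ} {σ : Fin (m + 1) → ℕ → ℤ}
    (hσ : ∀ j, StrictMono (σ j)) {B : Set (BoxInterval (m + 1))}
    (hB : ∀ R : BoxInterval (m + 1), (∀ j, ∃ i ≤ k, R.side j = 2 ^ σ j i) → R ∈ B)
    (hq : m * q < k) {α : ℝ} (hα : α < (2 ^ k)⁻¹) :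
    q ^ m * 2 ^ (k - (m + 1)) * volume (cantorProd σ k) ≤
      volume {x | ENNReal.ofReal α < maxOp B ((cantorProd σ k).indicator fun _ => 1) x} := by
  have hΛ : ∀ l ∈ boundedCompositions m q k, (∀ j, 1 ≤ l j) ∧ ∑ j, l j = k :=
    fun l hl => mem_boundedCompositions hq hl
  calc (q : ℝ≥0∞) ^ m * 2 ^ (k - (m + 1)) * volume (cantorProd σ k)
      = ∑ l ∈ boundedCompositions m q k, volume (cantorLayer σ k l) := by
        rw [Finset.sum_congr rfl fun l hl => volume_cantorLayer hσ (hΛ l hl).1 (hΛ l hl).2,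
          Finset.sum_const, card_boundedCompositions, nsmul_eq_mul, mul_assoc]
        norm_cast
    _ = volume (⋃ l ∈ boundedCompositions m q k, cantorLayer σ k l) := by
        exact (measure_biUnion_finset (pairwiseDisjoint_cantorLayer hσ fun l hl =>
          le_of_sum_eq (hΛ l hl).2) fun l _ => measurableSet_cantorLayer σ k l).symm
    _ ≤ _ := measure_mono <| iUnion₂_subset fun l hl =>
        cantorLayer_subset_maxOp_gt hσ hB (hΛ l hl).2 hα

lemma exists_nat_inv_two_pow_bounds {α : ℝ} (hα0 : 0 < α) (hα1 : α < 1) (m : ℕ) :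
    ∃ k : ℕ, α < (2 ^ k)⁻¹ ∧
      1 / α * (1 + Real.logb 2 (1 / α)) ^ m ≤ 2 ^ (k + 1) * (k + 2) ^ m := by
  set L := Real.logb 2 (1 / α)
  have hL : 0 < L := Real.logb_pos one_lt_two (one_lt_one_div hα0 hα1)
  have hceil : 1 ≤ ⌈L⌉₊ := Nat.one_le_iff_ne_zero.2 (Nat.ceil_pos.2 hL).ne'
  have hk : ((⌈L⌉₊ - 1 : ℕ) : ℝ) < L ∧ L ≤ (⌈L⌉₊ - 1 : ℕ) + 1 := by
    rw [Nat.cast_sub hceil, Nat.cast_one]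
    constructor <;> linarith [Nat.ceil_lt_add_one hL.le, Nat.le_ceil L]
  refine ⟨⌈L⌉₊ - 1, ?_, ?_⟩
  · have h := (Real.lt_logb_iff_rpow_lt one_lt_two (by positivity)).1 hk.1
    rw [Real.rpow_natCast] at h
    rwa [← one_div, lt_one_div hα0 (by positivity)]
  · have h := (Real.logb_le_iff_le_rpow one_lt_two (by positivity)).1 hk.2
    rw [← Nat.cast_succ, Real.rpow_natCast] at h
    exact mul_le_mul h (pow_le_pow_left₀ (by positivity) (by linarith) m)
      (by positivity) (by positivity)

lemma le_three_mul_mul_pred_div {m k : ℕ} (hm : 1 ≤ m) (hk : 3 * (m + 1) ≤ k) :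
    k + 2 ≤ 3 * m * ((k - 1) / m) := by
  have h1 := Nat.div_add_mod (k - 1) m
  have h2 := Nat.mod_lt (k - 1) hm
  rw [Nat.mul_assoc]
  generalize m * ((k - 1) / m) = p at *
  omega

lemma inv_mul_le_one_of_lt_three_mul {m k : ℕ} (hk : k < 3 * (m + 1)) {A : ℝ}
    (hA : A ≤ 2 ^ (k + 1) * (k + 2) ^ m) : ((8 : ℝ) ^ (m + 1) * (3 * m + 4) ^ m)⁻¹ * A ≤ 1 := by
  rw [inv_mul_le_one₀ (by positivity)]
  refine hA.trans (mul_le_mul ?_ (pow_le_pow_left₀ (by positivity) ?_ m) (by positivity)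
    (by positivity))
  · rw [show (8 : ℝ) = 2 ^ 3 by norm_num, ← pow_mul]
    exact pow_le_pow_right₀ one_le_two (by omega)
  · have : (k : ℝ) + 1 ≤ 3 * (m + 1) := by exact_mod_cast hk
    linarith

lemma inv_mul_le_pow_mul_two_pow {m k : ℕ} (hk : 3 * (m + 1) ≤ k) {A : ℝ}
    (hA : A ≤ 2 ^ (k + 1) * (k + 2) ^ m) :
    ((8 : ℝ) ^ (m + 1) * (3 * m + 4) ^ m)⁻¹ * A ≤ ((k - 1) / m : ℕ) ^ m * 2 ^ (k - (m + 1)) := by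
  have hpow : ((k : ℝ) + 2) ^ m ≤ (3 * m + 4) ^ m * ((k - 1) / m : ℕ) ^ m := by
    rcases Nat.eq_zero_or_pos m with rfl | hm
    · simp
    rw [← mul_pow]
    refine pow_le_pow_left₀ (by positivity) ?_ m
    have : ((k + 2 : ℕ) : ℝ) ≤ (3 * m * ((k - 1) / m) : ℕ) := by
      exact_mod_cast le_three_mul_mul_pred_div hm hk
    push_cast at this
    nlinarith [Nat.cast_nonneg (α := ℝ) ((k - 1) / m)]
  have h2 : (2 : ℝ) ^ (k + 1) ≤ 8 ^ (m + 1) * 2 ^ (k - (m + 1)) := by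
    rw [show (8 : ℝ) = 2 ^ 3 by norm_num, ← pow_mul, ← pow_add]
    exact pow_le_pow_right₀ one_le_two (by omega)
  rw [inv_mul_le_iff₀ (by positivity)]
  calc A ≤ 2 ^ (k + 1) * (k + 2) ^ m := hA
    _ ≤ 8 ^ (m + 1) * 2 ^ (k - (m + 1)) * ((3 * m + 4) ^ m * ((k - 1) / m : ℕ) ^ m) := by
      gcongr
    _ = _ := by ring

/-- Application I: sharp lower bound for the basis of all boxes with side lengths
`2^{s₁},…,2^{sₙ}`, `sⱼ ∈ Sⱼ`. -/
theorem statement9 (n : ℕ) (hn : 1 ≤ n) (S : Fin n → Set ℤ) (hS : ∀ j, (S j).Infinite)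
    (B : Set (BoxInterval n))
    (hBdef : B = {R | ∀ j, ∃ s ∈ S j, R.side j = (2:ℝ) ^ s}) :
    ∃ c : ℝ, 0 < c ∧ ∀ α : ℝ, 0 < α → α < 1 →
      ∃ E : Set (Fin n → ℝ), Bornology.IsBounded E ∧ MeasurableSet E ∧ 0 < volume E ∧
        ENNReal.ofReal (c * (1 / α) * (1 + Real.logb 2 (1 / α)) ^ (n - 1)) * volume E ≤
          volume {x | ENNReal.ofReal α < maxOp B (E.indicator fun _ => (1:ℝ)) x} := by
  obtain ⟨m, rfl⟩ : ∃ m, n = m + 1 := ⟨n - 1, by omega⟩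
  refine ⟨(8 ^ (m + 1) * (3 * m + 4) ^ m)⁻¹, by positivity, fun α hα0 hα1 => ?_⟩
  obtain ⟨k, hαk, hbound⟩ := exists_nat_inv_two_pow_bounds hα0 hα1 m
  rw [Nat.add_sub_cancel, mul_assoc]
  rcases lt_or_ge k (3 * (m + 1)) with hk | hk
  · choose t ht using fun j => (hS j).nonempty
    obtain ⟨R, hR⟩ := BoxInterval.exists_side_eq (fun j => 2 ^ t j) fun j => by positivity
    have hRB : R ∈ B := hBdef ▸ fun j => ⟨t j, ht j, hR j⟩
    refine ⟨R.toSet, R.isBounded_toSet, R.measurableSet_toSet, R.volume_toSet_pos, ?_⟩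
    refine le_trans ?_ (volume_toSet_le_volume_maxOp_gt hRB hα1)
    exact mul_le_of_le_one_left' <|
      ENNReal.ofReal_le_one.2 (inv_mul_le_one_of_lt_three_mul hk hbound)
  · choose σ hσ hσS using fun j => exists_strictMono_forall_le_mem (hS j) k
    have hB : ∀ R : BoxInterval (m + 1), (∀ j, ∃ i ≤ k, R.side j = 2 ^ σ j i) → R ∈ B :=
      fun R hR => hBdef ▸ fun j => (hR j).elim fun i ⟨hi, h⟩ => ⟨σ j i, hσS j i hi, h⟩
    refine ⟨cantorProd σ k, isBounded_cantorProd hσ, measurableSet_cantorProd σ k,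
      volume_cantorProd_pos hσ, le_trans ?_ (mul_volume_cantorProd_le_volume_maxOp_gt hσ hB
        ((Nat.mul_div_le (k - 1) m).trans_lt (by omega)) hαk)⟩
    gcongr
    refine (ENNReal.ofReal_le_ofReal (inv_mul_le_pow_mul_two_pow hk hbound)).trans_eq ?_
    rw [ENNReal.ofReal_mul (by positivity), ENNReal.ofReal_pow (by positivity),
      ENNReal.ofReal_pow zero_le_two, ENNReal.ofReal_natCast, ENNReal.ofReal_ofNat]
end
end
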